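/- Let G be a nonnegative random variable with 0 < E[G] < ∞ and LST g*(s) = E[e^{−sG}], let μ > 0, and let H be exponentially distributed with rate μ, independent of G. Assume 0 < ζ := P(G < H) < 1. Define h_{<G}*(s) = E[e^{−sH} 1{H < G}]/(1−ζ), g_{<H}*(s) = E[e^{−sG} 1{G < H}]/ζ, and g̃*(s) = (1 − g*(s))/(s E[G]). Then for every s > 0: h_{<G}*(s) · g̃*(s) · (1−ζ)/(1 − ζ g_{<H}*(s)) = g̃*(s) · μ/(s+μ); moreover, if E[G²] < ∞ the mean of the corresponding distribution equals E[G²]/(2E[G]) + 1/μ. -/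

import Mathlib

/-!
Conditioning on `G` and using the independence and the exponential law of `H`,
`E[e^{-sH}; H < G] = μ/(s+μ) (1 - g*(s+μ))` and `E[e^{-sG}; G < H] = g*(s+μ)`, so `ζ = g*(μ)`;
substituting, the factor `1 - g*(s+μ)` cancels. The mean is the limit of `(1 - a*(s))/s` as
`s → 0⁺`: for the residual transform `(1 - g̃*(s))/s = E[(e^{-sG} - 1 + sG)/s²]/E[G]`, which tends
to `E[G²]/(2E[G])` by dominated convergence (`0 ≤ e^{-u} - 1 + u ≤ u²`), and the exponential
factor `μ/(s+μ)` adds `1/μ`.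
-/

open MeasureTheory ProbabilityTheory Filter Topology Real Set

section Independence

variable {Ω α β : Type*} [MeasurableSpace Ω] [MeasurableSpace α] [MeasurableSpace β]
  {P : Measure Ω} [IsFiniteMeasure P] {X : Ω → α} {Y : Ω → β}

theorem ProbabilityTheory.IndepFun.integral_comp_eq_integral_integral (hXY : IndepFun X Y P)
    (hX : Measurable X) (hY : Measurable Y) {F : α × β → ℝ} (hF : StronglyMeasurable F)
    (hFint : Integrable (fun ω => F (X ω, Y ω)) P) :
    ∫ ω, F (X ω, Y ω) ∂P = ∫ ω, ∫ y, F (X ω, y) ∂(P.map Y) ∂P := by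
  have hmap : P.map (fun ω => (X ω, Y ω)) = (P.map X).prod (P.map Y) :=
    (indepFun_iff_map_prod_eq_prod_map_map hX.aemeasurable hY.aemeasurable).mp hXY
  have hint : Integrable F ((P.map X).prod (P.map Y)) := by
    rw [← hmap]
    exact (integrable_map_measure hF.aestronglyMeasurable (hX.prodMk hY).aemeasurable).mpr hFint
  rw [← integral_map (hX.prodMk hY).aemeasurable hF.aestronglyMeasurable, hmap,
    integral_prod F hint,
    integral_map hX.aemeasurable hF.integral_prod_right'.aestronglyMeasurable]

end Independence

section ExponentialLaw

variable {μ : ℝ}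

theorem ae_nonneg_expMeasure : ∀ᵐ x ∂expMeasure μ, 0 ≤ x := by
  refine (ae_withDensity_iff (measurable_gammaPDFReal 1 μ).ennreal_ofReal).mpr
    (ae_of_all _ fun x hx => ?_)
  by_contra! hneg
  exact hx (gammaPDF_of_neg hneg)

theorem map_eq_expMeasure_of_cdf {Ω : Type*} [MeasurableSpace Ω] {P : Measure Ω}
    [IsProbabilityMeasure P] {H : Ω → ℝ} (hH : Measurable H) (hμ : 0 < μ)
    (hcdf : ∀ x, 0 ≤ x → P {ω | H ω ≤ x} = ENNReal.ofReal (1 - exp (-(μ * x)))) :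
    P.map H = expMeasure μ := by
  have := isProbabilityMeasure_expMeasure hμ
  have := Measure.isProbabilityMeasure_map (μ := P) hH.aemeasurable
  refine Measure.eq_of_cdf _ _ (StieltjesFunction.ext fun x => ?_)
  rw [cdf_expMeasure_eq hμ, cdf_eq_real, map_measureReal_apply hH measurableSet_Iic]
  split_ifs with hx
  · rw [measureReal_def, show H ⁻¹' Iic x = {ω | H ω ≤ x} from rfl, hcdf x hx,
      ENNReal.toReal_ofReal]
    exact sub_nonneg.mpr (exp_le_one_iff.mpr (by nlinarith))
  · have hnull : P {ω | H ω ≤ 0} = 0 := by simp [hcdf 0 le_rfl]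
    exact (measureReal_eq_zero_iff).mpr (measure_mono_null
      (fun ω (hω : H ω ≤ x) => (hω.trans (not_le.mp hx).le : H ω ≤ 0)) hnull)

theorem integral_expMeasure_eq (hμ : 0 < μ) (f : ℝ → ℝ) :
    ∫ x, f x ∂expMeasure μ = ∫ x in Ici 0, μ * exp (-(μ * x)) * f x := by
  rw [expMeasure, gammaMeasure, integral_withDensity_eq_integral_toReal_smul (f := gammaPDF 1 μ)
    (measurable_gammaPDFReal 1 μ).ennreal_ofReal (ae_of_all _ fun _ => ENNReal.ofReal_lt_top),
    ← integral_indicator measurableSet_Ici]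
  refine integral_congr_ae (ae_of_all _ fun x => ?_)
  have hpdf : gammaPDFReal 1 μ x = if 0 ≤ x then μ * exp (-(μ * x)) else 0 := by
    simp [gammaPDFReal]
  by_cases hx : 0 ≤ x <;> simp [gammaPDF, hpdf, hx, indicator, smul_eq_mul,
    ENNReal.toReal_ofReal (mul_nonneg hμ.le (exp_pos _).le)]

theorem integral_expMeasure_ite_lt_const (hμ : 0 < μ) {g : ℝ} (hg : 0 ≤ g) (c : ℝ) :
    ∫ x, (if g < x then c else 0) ∂expMeasure μ = c * exp (-(μ * g)) := by
  have := isProbabilityMeasure_expMeasure hμ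
  have hIoi : (expMeasure μ).real (Ioi g) = exp (-(μ * g)) := by
    rw [← compl_Iic, measureReal_compl measurableSet_Iic, ← cdf_eq_real,
      cdf_expMeasure_eq hμ, if_pos hg]
    simp
  have hind : (fun x => if g < x then c else 0) = (Ioi g).indicator fun _ => c := by
    ext x; simp [indicator]
  rw [hind, integral_indicator_const c measurableSet_Ioi, hIoi, smul_eq_mul, mul_comm]

theorem integral_expMeasure_ite_lt_exp (hμ : 0 < μ) {g s : ℝ} (hg : 0 ≤ g) (hsμ : s + μ ≠ 0) :
    ∫ x, (if x < g then exp (-(s * x)) else 0) ∂expMeasure μ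
      = μ / (s + μ) * (1 - exp (-((s + μ) * g))) := by
  set t := s + μ with ht
  have hdens : ∀ x, μ * exp (-(μ * x)) * (if x < g then exp (-(s * x)) else 0)
      = (Iio g).indicator (fun x => μ / t * (t * exp (-(t * x)))) x := by
    intro x
    by_cases hx : x < g
    · simp only [hx, if_true, indicator_of_mem (mem_Iio.mpr hx), mul_assoc, ← exp_add]
      field_simp
      rw [ht]
      ring_nf
    · simp [hx]
  calc ∫ x, (if x < g then exp (-(s * x)) else 0) ∂expMeasure μ
      = ∫ x in Ico 0 g, μ / t * (t * exp (-(t * x))) := by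
        rw [integral_expMeasure_eq hμ, funext hdens, integral_indicator measurableSet_Iio,
          Measure.restrict_restrict measurableSet_Iio, Iio_inter_Ici]
    _ = μ / t * ∫ x in 0..g, t * exp (-(t * x)) := by
        rw [intervalIntegral.integral_of_le hg, ← setIntegral_congr_set Ico_ae_eq_Ioc,
          integral_const_mul]
    _ = μ / t * (1 - exp (-(t * g))) := by
        have hcont : Continuous fun x => t * exp (-(t * x)) := by fun_prop
        rw [intervalIntegral.integral_eq_sub_of_hasDerivAt
          (fun x _ => hasDerivAt_neg_exp_mul_exp) (hcont.intervalIntegrable _ _)]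
        simp only [mul_zero, neg_zero, exp_zero]
        ring

end ExponentialLaw

section LaplaceTransform

variable {Ω : Type*} [MeasurableSpace Ω] {P : Measure Ω} {G H : Ω → ℝ} {μ : ℝ}

theorem exp_neg_mul_le_one {s x : ℝ} (hs : 0 ≤ s) (hx : 0 ≤ x) : exp (-(s * x)) ≤ 1 :=
  exp_le_one_iff.mpr (neg_nonpos.mpr (mul_nonneg hs hx))

theorem integrable_exp_neg_mul [IsFiniteMeasure P] (hG : Measurable G) (hGpos : ∀ ω, 0 ≤ G ω)
    {s : ℝ} (hs : 0 ≤ s) : Integrable (fun ω => exp (-(s * G ω))) P :=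
  Integrable.of_bound (by fun_prop) 1 (ae_of_all _ fun ω => by
    rw [norm_of_nonneg (exp_pos _).le]
    exact exp_neg_mul_le_one hs (hGpos ω))

theorem integral_exp_neg_mul_antitone [IsFiniteMeasure P] (hG : Measurable G)
    (hGpos : ∀ ω, 0 ≤ G ω) {s t : ℝ} (hs : 0 ≤ s) (hst : s ≤ t) :
    ∫ ω, exp (-(t * G ω)) ∂P ≤ ∫ ω, exp (-(s * G ω)) ∂P :=
  integral_mono (integrable_exp_neg_mul hG hGpos (hs.trans hst))
    (integrable_exp_neg_mul hG hGpos hs)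
    fun ω => exp_le_exp.mpr (neg_le_neg (mul_le_mul_of_nonneg_right hst (hGpos ω)))

variable [IsProbabilityMeasure P]

theorem integral_ite_lt_exp_eq_of_indepFun (hG : Measurable G) (hH : Measurable H)
    (hGpos : ∀ ω, 0 ≤ G ω) (hGH : IndepFun G H P) (hlaw : P.map H = expMeasure μ) (hμ : 0 < μ)
    {s : ℝ} (hs : 0 ≤ s) :
    ∫ ω, (if G ω < H ω then exp (-(s * G ω)) else 0) ∂P = ∫ ω, exp (-((s + μ) * G ω)) ∂P := by
  set F : ℝ × ℝ → ℝ := fun p => if p.1 < p.2 then exp (-(s * p.1)) else 0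
  have hF : Measurable F :=
    Measurable.ite (measurableSet_lt measurable_fst measurable_snd) (by fun_prop) measurable_const
  refine (hGH.integral_comp_eq_integral_integral hG hH hF.stronglyMeasurable ?_).trans ?_
  · refine Integrable.of_bound (hF.comp (hG.prodMk hH)).aestronglyMeasurable 1
      (ae_of_all _ fun ω => ?_)
    dsimp only [F]
    split_ifs
    · rw [norm_of_nonneg (exp_pos _).le]
      exact exp_neg_mul_le_one hs (hGpos ω)
    · simp
  · refine integral_congr_ae (ae_of_all _ fun ω => ?_)
    simp only [F, hlaw, integral_expMeasure_ite_lt_const hμ (hGpos ω), ← exp_add]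
    ring_nf

theorem integral_ite_gt_exp_eq_of_indepFun (hG : Measurable G) (hH : Measurable H)
    (hGpos : ∀ ω, 0 ≤ G ω) (hGH : IndepFun G H P) (hlaw : P.map H = expMeasure μ) (hμ : 0 < μ)
    {s : ℝ} (hs : 0 ≤ s) :
    ∫ ω, (if H ω < G ω then exp (-(s * H ω)) else 0) ∂P
      = μ / (s + μ) * (1 - ∫ ω, exp (-((s + μ) * G ω)) ∂P) := by
  have hHpos : ∀ᵐ ω ∂P, 0 ≤ H ω := ae_of_ae_map hH.aemeasurable (hlaw ▸ ae_nonneg_expMeasure)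
  set F : ℝ × ℝ → ℝ := fun p => if p.2 < p.1 then exp (-(s * p.2)) else 0
  have hF : Measurable F :=
    Measurable.ite (measurableSet_lt measurable_snd measurable_fst) (by fun_prop) measurable_const
  refine (hGH.integral_comp_eq_integral_integral hG hH hF.stronglyMeasurable ?_).trans ?_
  · refine Integrable.of_bound (hF.comp (hG.prodMk hH)).aestronglyMeasurable 1
      (hHpos.mono fun ω hω => ?_)
    dsimp only [F]
    split_ifs
    · rw [norm_of_nonneg (exp_pos _).le]
      exact exp_neg_mul_le_one hs hω
    · simp
  · have hsμ : s + μ ≠ 0 := by positivity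
    simp only [F, hlaw, integral_expMeasure_ite_lt_exp hμ (hGpos _) hsμ]
    rw [integral_const_mul, integral_sub (integrable_const 1)
      (integrable_exp_neg_mul hG hGpos (by positivity)), integral_const, probReal_univ, one_smul]

theorem measureReal_lt_eq_integral_exp_of_indepFun (hG : Measurable G) (hH : Measurable H)
    (hGpos : ∀ ω, 0 ≤ G ω) (hGH : IndepFun G H P) (hlaw : P.map H = expMeasure μ) (hμ : 0 < μ) :
    P.real {ω | G ω < H ω} = ∫ ω, exp (-(μ * G ω)) ∂P := by
  have h := integral_ite_lt_exp_eq_of_indepFun hG hH hGpos hGH hlaw hμ le_rfl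
  simp only [zero_mul, neg_zero, exp_zero, zero_add] at h
  rw [← h, ← integral_indicator_one (measurableSet_lt hG hH)]
  rfl

end LaplaceTransform

theorem exp_neg_sub_one_add_nonneg (u : ℝ) : 0 ≤ exp (-u) - 1 + u := by
  linarith [add_one_le_exp (-u)]

theorem exp_neg_sub_one_add_le_sq {u : ℝ} (hu : 0 ≤ u) : exp (-u) - 1 + u ≤ u ^ 2 := by
  rcases le_or_gt u 1 with hu1 | hu1
  · have h := abs_exp_sub_one_sub_id_le (x := -u) (by rwa [abs_neg, abs_of_nonneg hu])
    rw [neg_sq, sub_neg_eq_add] at h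
    exact (le_abs_self _).trans h
  · nlinarith [exp_le_one_iff.mpr (neg_nonpos.mpr hu)]

theorem tendsto_exp_neg_mul_sub_one_add_div_sq (x : ℝ) :
    Tendsto (fun s => (exp (-(s * x)) - 1 + s * x) / s ^ 2) (𝓝[≠] 0) (𝓝 (x ^ 2 / 2)) := by
  have hlin : Tendsto (fun s : ℝ => -(s * x)) (𝓝 0) (𝓝 0) := by
    simpa using ((tendsto_id (x := 𝓝 (0 : ℝ))).mul_const x).neg
  have hrem : (fun s : ℝ => exp (-(s * x)) - 1 + s * x - s ^ 2 * (x ^ 2 / 2)) =o[𝓝 0]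
      fun s => s ^ 2 := by
    have h := ((exp_sub_sum_range_succ_isLittleO_pow 2).comp_tendsto hlin).trans_isBigO
      (Asymptotics.isBigO_refl (fun s : ℝ => s ^ 2) (𝓝 0) |>.const_mul_left (x ^ 2) |>.congr_left
        fun s => by simp only [Function.comp_apply]; ring)
    refine h.congr_left fun s => ?_
    simp [Finset.sum_range_succ]
    ring
  have h := (hrem.tendsto_div_nhds_zero.mono_left (nhdsWithin_le_nhds (s := {0}ᶜ))).add_const
    (x ^ 2 / 2)
  rw [zero_add] at h
  refine h.congr' (eventually_nhdsWithin_of_forall fun s (hs : s ≠ 0) => ?_)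
  field_simp
  ring

section SecondMoment

variable {Ω : Type*} [MeasurableSpace Ω] {P : Measure Ω} {G : Ω → ℝ}

theorem tendsto_integral_exp_neg_mul_sub_one_add_div_sq (hG : Measurable G)
    (hGpos : ∀ ω, 0 ≤ G ω) (hG2 : Integrable (fun ω => G ω ^ 2) P) :
    Tendsto (fun s => ∫ ω, (exp (-(s * G ω)) - 1 + s * G ω) / s ^ 2 ∂P) (𝓝[>] 0)
      (𝓝 (∫ ω, G ω ^ 2 / 2 ∂P)) := by
  refine tendsto_integral_filter_of_dominated_convergence (fun ω => G ω ^ 2)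
    (Eventually.of_forall fun _ => by fun_prop) ?_ hG2 (ae_of_all _ fun ω =>
      (tendsto_exp_neg_mul_sub_one_add_div_sq (G ω)).mono_left
        (nhdsWithin_mono _ fun s (hs : 0 < s) => hs.ne'))
  filter_upwards [self_mem_nhdsWithin] with s (hs : 0 < s)
  refine ae_of_all _ fun ω => ?_
  have hu : 0 ≤ s * G ω := mul_nonneg hs.le (hGpos ω)
  rw [norm_of_nonneg (div_nonneg (exp_neg_sub_one_add_nonneg _) (sq_nonneg s)),
    div_le_iff₀ (by positivity)]
  linarith [exp_neg_sub_one_add_le_sq hu, mul_pow s (G ω) 2]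

variable [IsProbabilityMeasure P]

theorem tendsto_one_sub_residualLST_div (hG : Measurable G) (hGpos : ∀ ω, 0 ≤ G ω)
    (hGint : Integrable G P) (hEG : ∫ ω, G ω ∂P ≠ 0) (hG2 : Integrable (fun ω => G ω ^ 2) P) :
    Tendsto (fun s => (1 - (1 - ∫ ω, exp (-(s * G ω)) ∂P) / (s * ∫ ω, G ω ∂P)) / s) (𝓝[>] 0)
      (𝓝 ((∫ ω, G ω ^ 2 ∂P) / (2 * ∫ ω, G ω ∂P))) := by
  have h := (tendsto_integral_exp_neg_mul_sub_one_add_div_sq hG hGpos hG2).div_const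
    (∫ ω, G ω ∂P)
  rw [integral_div, div_div] at h
  refine h.congr' (eventually_nhdsWithin_of_forall fun s (hs : 0 < s) => ?_)
  have hL : ∫ ω, (exp (-(s * G ω)) - 1 + s * G ω) / s ^ 2 ∂P
      = (∫ ω, exp (-(s * G ω)) ∂P - 1 + s * ∫ ω, G ω ∂P) / s ^ 2 := by
    have hi : Integrable (fun ω => exp (-(s * G ω)) - 1) P :=
      (integrable_exp_neg_mul hG hGpos hs.le).sub (integrable_const 1)
    rw [integral_div, integral_add hi (hGint.const_mul s),
      integral_sub (integrable_exp_neg_mul hG hGpos hs.le) (integrable_const 1), integral_const_mul,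
      integral_const, probReal_univ, one_smul]
  rw [hL]
  field_simp
  ring

end SecondMoment

theorem tendsto_one_sub_mul_div_of_tendsto_one_sub_div {r : ℝ → ℝ} {a μ : ℝ} (hμ : 0 < μ)
    (hr : Tendsto (fun s => (1 - r s) / s) (𝓝[>] 0) (𝓝 a)) :
    Tendsto (fun s => (1 - r s * (μ / (s + μ))) / s) (𝓝[>] 0) (𝓝 (a + 1 / μ)) := by
  have hs : Tendsto (fun s : ℝ => s) (𝓝[>] 0) (𝓝 0) := tendsto_nhdsWithin_of_tendsto_nhds tendsto_id
  have hr1 : Tendsto r (𝓝[>] 0) (𝓝 1) := by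
    have h := tendsto_const_nhds (x := (1 : ℝ)).sub (hs.mul hr)
    rw [zero_mul, sub_zero] at h
    refine h.congr' (eventually_nhdsWithin_of_forall fun s (hs : 0 < s) => ?_)
    field_simp
    ring
  have hsμ : Tendsto (fun s : ℝ => s + μ) (𝓝[>] 0) (𝓝 μ) := by
    simpa using hs.add_const μ
  refine (hr.add (hr1.div hsμ hμ.ne')).congr'
    (eventually_nhdsWithin_of_forall fun s (hs : 0 < s) => ?_)
  have : s + μ ≠ 0 := by positivity
  simp only [Pi.div_apply]
  field_simp
  ring

theorem stmt_11_general {Ω : Type*} [MeasurableSpace Ω] (P : Measure Ω) [IsProbabilityMeasure P]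
    (G H : Ω → ℝ) (hG : Measurable G) (hH : Measurable H)
    (hGpos : ∀ ω, 0 ≤ G ω)
    (hGint : Integrable G P)
    (EG : ℝ) (hEG : EG = ∫ ω, G ω ∂P) (hEGpos : 0 < EG)
    (gstar : ℝ → ℝ) (hgstar : ∀ s : ℝ, gstar s = ∫ ω, Real.exp (-(s * G ω)) ∂P)
    (mu : ℝ) (hmu : 0 < mu)
    (hHexp : ∀ x : ℝ, 0 ≤ x →
      P {ω | H ω ≤ x} = ENNReal.ofReal (1 - Real.exp (-(mu * x))))
    (hindep : IndepFun G H P)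
    (zeta : ℝ) (hzeta : zeta = (P {ω | G ω < H ω}).toReal)
    (hzeta0 : 0 < zeta) (hzeta1 : zeta < 1)
    (hlt glt gt : ℝ → ℝ)
    (hhlt : ∀ s : ℝ,
      hlt s = (∫ ω, (if H ω < G ω then Real.exp (-(s * H ω)) else 0) ∂P) / (1 - zeta))
    (hglt : ∀ s : ℝ,
      glt s = (∫ ω, (if G ω < H ω then Real.exp (-(s * G ω)) else 0) ∂P) / zeta)
    (hgt : ∀ s : ℝ, gt s = (1 - gstar s) / (s * EG)) :
    (∀ s : ℝ, 0 < s →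
      hlt s * gt s * ((1 - zeta) / (1 - zeta * glt s)) = gt s * (mu / (s + mu))) ∧
      (Integrable (fun ω => G ω ^ 2) P →
        Tendsto (fun s : ℝ => (1 - gt s * (mu / (s + mu))) / s) (𝓝[>] 0)
          (𝓝 ((∫ ω, G ω ^ 2 ∂P) / (2 * EG) + 1 / mu))) := by
  have hlaw := map_eq_expMeasure_of_cdf hH hmu hHexp
  refine ⟨fun s hs => ?_, fun hG2 => ?_⟩
  · have hζ : zeta = ∫ ω, exp (-(mu * G ω)) ∂P := by
      rw [hzeta, ← measureReal_def, measureReal_lt_eq_integral_exp_of_indepFun hG hH hGpos hindep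
        hlaw hmu]
    have hL : ∫ ω, exp (-((s + mu) * G ω)) ∂P ≤ zeta :=
      hζ ▸ integral_exp_neg_mul_antitone hG hGpos hmu.le (by linarith)
    rw [hhlt, hglt, integral_ite_gt_exp_eq_of_indepFun hG hH hGpos hindep hlaw hmu hs.le,
      integral_ite_lt_exp_eq_of_indepFun hG hH hGpos hindep hlaw hmu hs.le]
    have : 1 - ∫ ω, exp (-((s + mu) * G ω)) ∂P ≠ 0 := by linarith
    have : 1 - zeta ≠ 0 := by linarith
    field_simp
  · subst hEG
    simp_rw [hgt, hgstar]
    exact tendsto_one_sub_mul_div_of_tendsto_one_sub_div hmu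
      (tendsto_one_sub_residualLST_div hG hGpos hGint hEGpos.ne' hG2)

/-- AoI in the preemptive LCFS GI/M/1 queue: with `H` exponential with rate `μ`
independent of the interarrival time `G`, `ζ = P(G < H) ∈ (0,1)`, for every `s > 0`
the AoI LST satisfies
`h_{<G}*(s) g̃*(s) (1-ζ)/(1-ζ g_{<H}*(s)) = g̃*(s) μ/(s+μ)`, and (if `E[G²] < ∞`)
the mean of the corresponding distribution is
`lim_{s→0+} (1 - g̃*(s) μ/(s+μ))/s = E[G²]/(2E[G]) + 1/μ`. -/
theorem stmt_11 {Ω : Type*} [MeasurableSpace Ω] (P : Measure Ω) [IsProbabilityMeasure P]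
    (G H : Ω → ℝ) (hG : Measurable G) (hH : Measurable H)
    (hGpos : ∀ ω, 0 ≤ G ω) (hHpos : ∀ ω, 0 ≤ H ω)
    (hGint : Integrable G P)
    (EG : ℝ) (hEG : EG = ∫ ω, G ω ∂P) (hEGpos : 0 < EG)
    (gstar : ℝ → ℝ) (hgstar : ∀ s : ℝ, gstar s = ∫ ω, Real.exp (-(s * G ω)) ∂P)
    (mu : ℝ) (hmu : 0 < mu)
    (hHexp : ∀ x : ℝ, 0 ≤ x →
      P {ω | H ω ≤ x} = ENNReal.ofReal (1 - Real.exp (-(mu * x))))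
    (hindep : IndepFun G H P)
    (zeta : ℝ) (hzeta : zeta = (P {ω | G ω < H ω}).toReal)
    (hzeta0 : 0 < zeta) (hzeta1 : zeta < 1)
    (hlt glt gt : ℝ → ℝ)
    (hhlt : ∀ s : ℝ,
      hlt s = (∫ ω, (if H ω < G ω then Real.exp (-(s * H ω)) else 0) ∂P) / (1 - zeta))
    (hglt : ∀ s : ℝ,
      glt s = (∫ ω, (if G ω < H ω then Real.exp (-(s * G ω)) else 0) ∂P) / zeta)
    (hgt : ∀ s : ℝ, gt s = (1 - gstar s) / (s * EG)) :
    (∀ s : ℝ, 0 < s →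
      hlt s * gt s * ((1 - zeta) / (1 - zeta * glt s)) = gt s * (mu / (s + mu))) ∧
      (Integrable (fun ω => G ω ^ 2) P →
        Tendsto (fun s : ℝ => (1 - gt s * (mu / (s + mu))) / s) (𝓝[>] 0)
          (𝓝 ((∫ ω, G ω ^ 2 ∂P) / (2 * EG) + 1 / mu))) :=
  stmt_11_general P G H hG hH hGpos hGint EG hEG hEGpos gstar hgstar mu hmu hHexp hindep zeta hzeta
    hzeta0 hzeta1 hlt glt gt hhlt hglt hgt
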